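/- Let p ≥ 1, let c be a control function and suppose Y^0,…,Y^{n−1} (n = ⌊p⌋) are maps into spaces of multilinear forms satisfying the controlled-path remainder bounds ‖R^k_{s,u}‖ ≤ C c(s,u)^{(n−k)/p}, and suppose ‖𝕏^{k+1}_{u,t}‖ ≤ C c(u,t)^{(k+1)/p}. Define Ξ_{s,t} := Σ_{k=0}^{n−1} Y^k_s 𝕏^{k+1}_{s,t}. Then the coboundary δΞ_{s,u,t} := Ξ_{s,t} − Ξ_{s,u} − Ξ_{u,t} equals −Σ_{k=0}^{n−1} R^k_{s,u} ⊗ 𝕏^{k+1}_{u,t}, provided the reduced Chen relation 𝕏^{k+1}_{s,t} = Sym(Σ_{j=0}^{k+1} 𝕏^{k+1−j}_{s,u} ⊗ 𝕏^j_{u,t}) holds and each Y^k_s is symmetric with Y^k_u = Σ_{j=k}^{n−1} Y^j_s 𝕏^{j−k}_{s,u} + R^k_{s,u}. -/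

import Mathlib

/-!
Expanding `𝕏^{k+1}_{s,t}` by Chen's relation splits `Ξ_{s,t}` into `Ξ_{s,u}` plus a double sum
`Σ_{j ≤ k < n} Y^k_s (𝕏^{k-j}_{s,u} 𝕏^{j+1}_{u,t})`, while expanding `Y^k_u` by the controlled
expansion splits `Ξ_{u,t}` into the same double sum, summed in the other order, plus
`Σ_k R^k_{s,u} 𝕏^{k+1}_{u,t}`.
-/

open Finset

theorem sum_range_sub_mul_eq_add_of_apply_zero_eq_one {A : Type*} [Semiring A] (a b : ℕ → A)
    (hb : b 0 = 1) (k : ℕ) :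
    ∑ j ∈ range (k + 2), a (k + 1 - j) * b j =
      a (k + 1) + ∑ j ∈ range (k + 1), a (k - j) * b (j + 1) := by
  simp [sum_range_succ' _ (k + 1), hb, add_comm]

theorem sum_range_sum_range_succ_eq_sum_range_sum_Icc {M : Type*} [AddCommMonoid M] (n : ℕ)
    (f : ℕ → ℕ → M) :
    ∑ k ∈ range n, ∑ j ∈ range (k + 1), f k j = ∑ j ∈ range n, ∑ k ∈ Icc j (n - 1), f k j := by
  refine sum_comm' fun k j => ?_
  simp only [mem_range, mem_Icc]
  omega

section Coboundary

variable {A W F : Type*} [Semiring A] [AddCommGroup W] [FunLike F A W] [AddMonoidHomClass F A W]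

/-- With `a = 𝕏_{s,u}`, `b = 𝕏_{u,t}`, `x = 𝕏_{s,t}`, `Ys = Y_s`, `Yu = Y_u` and `r = R_{s,u}`. -/
theorem sum_sub_sum_sub_sum_eq_neg_sum_of_chen {n : ℕ} (a b x : ℕ → A) (Ys Yu : ℕ → F)
    (r : ℕ → A → W) (hb : b 0 = 1)
    (hchen : ∀ k, x k = ∑ j ∈ range (k + 1), a (k - j) * b j)
    (hctrl : ∀ k < n, ∀ y, Yu k y = ∑ j ∈ Icc k (n - 1), Ys j (a (j - k) * y) + r k y) :
    ∑ k ∈ range n, Ys k (x (k + 1)) - ∑ k ∈ range n, Ys k (a (k + 1)) -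
        ∑ k ∈ range n, Yu k (b (k + 1)) =
      -∑ k ∈ range n, r k (b (k + 1)) := by
  have hx : ∑ k ∈ range n, Ys k (x (k + 1)) = ∑ k ∈ range n, Ys k (a (k + 1)) +
      ∑ k ∈ range n, ∑ j ∈ range (k + 1), Ys k (a (k - j) * b (j + 1)) := by
    simp only [← sum_add_distrib, ← map_sum, ← map_add, hchen,
      sum_range_sub_mul_eq_add_of_apply_zero_eq_one a b hb]
  have hYu : ∑ k ∈ range n, Yu k (b (k + 1)) =
      ∑ j ∈ range n, ∑ k ∈ Icc j (n - 1), Ys k (a (k - j) * b (j + 1)) +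
        ∑ k ∈ range n, r k (b (k + 1)) := by
    rw [← sum_add_distrib]
    exact sum_congr rfl fun k hk => hctrl k (mem_range.mp hk) _
  rw [hx, hYu, sum_range_sum_range_succ_eq_sum_range_sum_Icc]
  abel

end Coboundary

theorem stmt8_general {A W : Type*} [NormedCommRing A] [NormedAlgebra ℝ A]
    [NormedAddCommGroup W] [NormedSpace ℝ W]
    (T : ℝ) (n : ℕ)
    (𝕏 : ℕ → ℝ → ℝ → A) (Y : ℕ → ℝ → (A →L[ℝ] W)) (R : ℕ → ℝ → ℝ → (A →L[ℝ] W))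
    (hone : ∀ s t, 0 ≤ s → s ≤ t → t ≤ T → 𝕏 0 s t = 1)
    (hchen : ∀ k, ∀ s u t, 0 ≤ s → s ≤ u → u ≤ t → t ≤ T →
      𝕏 k s t = ∑ j ∈ Finset.range (k + 1), 𝕏 (k - j) s u * 𝕏 j u t)
    (hctrl : ∀ k, k < n → ∀ s u, 0 ≤ s → s ≤ u → u ≤ T → ∀ a : A,
      Y k u a = (∑ j ∈ Finset.Icc k (n - 1), Y j s (𝕏 (j - k) s u * a)) + R k s u a) :
    ∀ s u t, 0 ≤ s → s ≤ u → u ≤ t → t ≤ T →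
      (∑ k ∈ Finset.range n, Y k s (𝕏 (k + 1) s t)) -
          (∑ k ∈ Finset.range n, Y k s (𝕏 (k + 1) s u)) -
          (∑ k ∈ Finset.range n, Y k u (𝕏 (k + 1) u t)) =
        -∑ k ∈ Finset.range n, R k s u (𝕏 (k + 1) u t) := by
  intro s u t hs hsu hut htT
  exact sum_sub_sum_sub_sum_eq_neg_sum_of_chen (𝕏 · s u) (𝕏 · u t) (𝕏 · s t) (Y · s) (Y · u)
    (fun k => R k s u) (hone u t (hs.trans hsu) hut htT)
    (fun k => hchen k s u t hs hsu hut htT)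
    (fun k hk => hctrl k hk s u hs hsu (hut.trans htT))

/-- the algebraic core of the sewing argument for the reduced rough integral.
The symmetric tensor levels are encoded in a commutative normed algebra `A` (products of levels
corresponding to symmetrized tensor products), the levels of the reduced rough path being
`𝕏 k s t ∈ A` with `𝕏 0 = 1`, and `Y k s, R k s u : A →L[ℝ] W` pairing a level against a
linear functional, so that `Ξ_{s,t} = Σ_{k<n} Y^k_s 𝕏^{k+1}_{s,t}`.  Provided the reduced Chen
relation holds, each `Y^k` satisfies the controlled expansion `Y^k_u = Σ_{j=k}^{n-1} Y^j_s
𝕏^{j-k}_{s,u} + R^k_{s,u}`, and the controlled-path/rough-path norm bounds hold, the coboundary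
satisfies `δΞ_{s,u,t} = -Σ_{k<n} R^k_{s,u} ⊗ 𝕏^{k+1}_{u,t}`. -/
theorem stmt8 {A W : Type*} [NormedCommRing A] [NormedAlgebra ℝ A]
    [NormedAddCommGroup W] [NormedSpace ℝ W]
    (T p : ℝ) (hT : 0 ≤ T) (hp : 1 ≤ p) (n : ℕ) (hn : n = ⌊p⌋₊)
    (c : ℝ → ℝ → ℝ)
    (hc_nonneg : ∀ s t, 0 ≤ s → s ≤ t → t ≤ T → 0 ≤ c s t)
    (hc_diag : ∀ t, 0 ≤ t → t ≤ T → c t t = 0)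
    (hc_super : ∀ s u t, 0 ≤ s → s ≤ u → u ≤ t → t ≤ T → c s u + c u t ≤ c s t)
    (𝕏 : ℕ → ℝ → ℝ → A) (Y : ℕ → ℝ → (A →L[ℝ] W)) (R : ℕ → ℝ → ℝ → (A →L[ℝ] W))
    (hone : ∀ s t, 0 ≤ s → s ≤ t → t ≤ T → 𝕏 0 s t = 1)
    (hchen : ∀ k, ∀ s u t, 0 ≤ s → s ≤ u → u ≤ t → t ≤ T →
      𝕏 k s t = ∑ j ∈ Finset.range (k + 1), 𝕏 (k - j) s u * 𝕏 j u t)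
    (hctrl : ∀ k, k < n → ∀ s u, 0 ≤ s → s ≤ u → u ≤ T → ∀ a : A,
      Y k u a = (∑ j ∈ Finset.Icc k (n - 1), Y j s (𝕏 (j - k) s u * a)) + R k s u a)
    (C : ℝ)
    (hR : ∀ k, k < n → ∀ s u, 0 ≤ s → s ≤ u → u ≤ T →
      ‖R k s u‖ ≤ C * c s u ^ (((n : ℝ) - (k : ℝ)) / p))
    (h𝕏 : ∀ k, k < n → ∀ u t, 0 ≤ u → u ≤ t → t ≤ T →
      ‖𝕏 (k + 1) u t‖ ≤ C * c u t ^ (((k : ℝ) + 1) / p)) :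
    ∀ s u t, 0 ≤ s → s ≤ u → u ≤ t → t ≤ T →
      (∑ k ∈ Finset.range n, Y k s (𝕏 (k + 1) s t)) -
          (∑ k ∈ Finset.range n, Y k s (𝕏 (k + 1) s u)) -
          (∑ k ∈ Finset.range n, Y k u (𝕏 (k + 1) u t)) =
        -∑ k ∈ Finset.range n, R k s u (𝕏 (k + 1) u t) :=
  stmt8_general T n 𝕏 Y R hone hchen hctrl
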